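/- If X, Y, Z are positive integers with gcd(X, Z) = 1 satisfying X⁴ + Y⁴ = 2Z², then X = Y = Z = 1. -/

import Mathlib

/-!
Subtracting, `x⁴ - y⁴ = 2 (z² - y⁴)`, and squaring the relation gives
`z⁴ - (xy)⁴ = (z² - y⁴)²`, with `z` coprime to `xy`. So unless `x = y` this is a solution of
`a⁴ - b⁴ = c²` with `bc ≠ 0` (Fermat's right triangle theorem), which is impossible by descent:
writing `(b², c, a²)` (for `b` odd) or `(c, b², a²)` (for `b` even) as a primitive Pythagorean
triple produces a solution with smaller `|a|`. Once `x = y`, `z = x²` and `gcd(x, z) = 1`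
forces `x = 1`.
-/

def FermatRightTriangle (a b c : ℤ) : Prop :=
  IsCoprime a b ∧ b ≠ 0 ∧ c ≠ 0 ∧ a ^ 4 = b ^ 4 + c ^ 2

theorem Int.sq_of_isCoprime_of_nonneg {a b c : ℤ} (h : IsCoprime a b) (ha : 0 ≤ a)
    (heq : a * b = c ^ 2) : ∃ d, a = d ^ 2 := by
  obtain ⟨d, rfl | rfl⟩ := Int.sq_of_isCoprime h heq
  · exact ⟨d, rfl⟩
  · exact ⟨0, by nlinarith [sq_nonneg d]⟩

theorem exists_fermatRightTriangle_of_sq_add_sq {o e a b : ℤ} (hoe : IsCoprime o e) (ho : Odd o)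
    (ho0 : 0 < o) (he0 : 0 < e) (ha : 0 < a) (hsum : a ^ 2 = o ^ 2 + e ^ 2)
    (hb : b ^ 2 = 2 * o * e) :
    ∃ u v i, FermatRightTriangle u v i ∧ u.natAbs < a.natAbs := by
  have ht : PythagoreanTriple o e a := by
    unfold PythagoreanTriple; linear_combination -hsum
  obtain ⟨p, q, hopq, hepq, hapq, hpq, -, hp0⟩ :=
    ht.coprime_classification' (Int.isCoprime_iff_gcd_eq_one.mp hoe) (Int.odd_iff.mp ho) ha
  replace hpq := Int.isCoprime_iff_gcd_eq_one.mpr hpq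
  have hpq0 : 0 < p * q := by linarith
  have hq0 : 0 < q := by nlinarith
  obtain ⟨r, rfl⟩ : 2 ∣ b := by
    rw [← Int.pow_dvd_pow_iff two_ne_zero, hb, hepq]
    exact ⟨o * p * q, by ring⟩
  have hsq : o * (p * q) = r ^ 2 := by
    rw [hepq] at hb
    linarith
  have hcop : IsCoprime o (p * q) := by
    rw [hepq, mul_assoc] at hoe
    exact hoe.of_mul_right_right
  -- `o`, `p`, `q` are pairwise coprime and `o * p * q = r²`, so each of them is a square.
  obtain ⟨i, hi⟩ := Int.sq_of_isCoprime_of_nonneg hcop ho0.le hsq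
  obtain ⟨j, hj⟩ := Int.sq_of_isCoprime_of_nonneg hcop.symm hpq0.le (by rw [mul_comm, hsq])
  obtain ⟨u, hu⟩ := Int.sq_of_isCoprime_of_nonneg hpq hp0 hj
  obtain ⟨v, hv⟩ := Int.sq_of_isCoprime_of_nonneg hpq.symm hq0.le (by rw [mul_comm, hj])
  subst hu hv
  refine ⟨u, v, i, ⟨(IsCoprime.pow_iff two_pos two_pos).mp hpq, ?_, ?_, ?_⟩, ?_⟩
  · rintro rfl; simp at hq0
  · rintro rfl; simp at hi; omega
  · linear_combination hi - hopq
  · rw [Int.natAbs_lt_iff_sq_lt]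
    nlinarith [Int.le_self_sq (u ^ 2)]

namespace FermatRightTriangle

variable {a b c : ℤ}

theorem isCoprime_right (h : FermatRightTriangle a b c) : IsCoprime b c := by
  obtain ⟨hab, -, -, heq⟩ := h
  have : IsCoprime b (a ^ 4 + b * -b ^ 3) := hab.symm.pow_right.add_mul_left_right _
  rw [show a ^ 4 + b * -b ^ 3 = c * c by linear_combination heq] at this
  exact this.of_mul_right_left

theorem ne_zero_left (h : FermatRightTriangle a b c) : a ≠ 0 := by
  rintro rfl
  obtain ⟨-, hb, -, heq⟩ := h
  have : 0 < b ^ 4 := by positivity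
  nlinarith [sq_nonneg c]

theorem exists_smaller_of_odd (h : FermatRightTriangle a b c) (hb : Odd b) :
    ∃ a' b' c', FermatRightTriangle a' b' c' ∧ a'.natAbs < a.natAbs := by
  have ha := h.ne_zero_left
  have hbc := h.isCoprime_right
  obtain ⟨-, hb0, hc0, heq⟩ := h
  have ht : PythagoreanTriple (b ^ 2) c (a ^ 2) := by
    unfold PythagoreanTriple; linear_combination -heq
  obtain ⟨m, n, hbmn, hcmn, hamn, hmn, -, -⟩ := ht.coprime_classification'
    (Int.isCoprime_iff_gcd_eq_one.mp hbc.pow_left) (Int.odd_iff.mp hb.pow)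
    (by positivity)
  have hn : n ≠ 0 := by rintro rfl; simp_all
  refine ⟨m, n, a * b,
    ⟨Int.isCoprime_iff_gcd_eq_one.mpr hmn, hn, mul_ne_zero ha hb0, ?_⟩, ?_⟩
  · linear_combination -(m ^ 2 - n ^ 2) * hamn - a ^ 2 * hbmn
  · rw [Int.natAbs_lt_iff_sq_lt, hamn]
    have : 0 < n ^ 2 := by positivity
    linarith

theorem exists_smaller_of_even (h : FermatRightTriangle a b c) (hb : Even b) :
    ∃ a' b' c', FermatRightTriangle a' b' c' ∧ a'.natAbs < a.natAbs := by
  have ha := h.ne_zero_left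
  have hbc := h.isCoprime_right
  obtain ⟨-, hb0, -, heq⟩ := h
  have hc : Odd c := by
    obtain ⟨k, rfl⟩ := hb
    rw [← two_mul] at hbc
    exact Int.isCoprime_two_left.mp hbc.of_mul_left_left
  have ht : PythagoreanTriple c (b ^ 2) (a ^ 2) := by
    unfold PythagoreanTriple; linear_combination -heq
  obtain ⟨m, n, -, hbmn, hamn, hmn, hpar, hm0⟩ := ht.coprime_classification'
    (Int.isCoprime_iff_gcd_eq_one.mp hbc.symm.pow_right) (Int.odd_iff.mp hc) (by positivity)
  replace hmn := Int.isCoprime_iff_gcd_eq_one.mpr hmn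
  have hb2 : 0 < b ^ 2 := by positivity
  have hn0 : 0 < n := by nlinarith
  have hm0 : 0 < m := by nlinarith
  have habs : |a| ^ 2 = a ^ 2 := sq_abs a
  rw [← Int.natAbs_abs a]
  rcases hpar with ⟨-, hn⟩ | ⟨hm, -⟩
  · exact exists_fermatRightTriangle_of_sq_add_sq (b := b) hmn.symm (Int.odd_iff.mpr hn) hn0 hm0
      (abs_pos.mpr ha) (by linear_combination habs + hamn) (by linear_combination hbmn)
  · exact exists_fermatRightTriangle_of_sq_add_sq hmn (Int.odd_iff.mpr hm) hm0 hn0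
      (abs_pos.mpr ha) (by linear_combination habs + hamn) hbmn

theorem exists_smaller (h : FermatRightTriangle a b c) :
    ∃ a' b' c', FermatRightTriangle a' b' c' ∧ a'.natAbs < a.natAbs :=
  (Int.even_or_odd b).elim h.exists_smaller_of_even h.exists_smaller_of_odd

end FermatRightTriangle

theorem not_fermatRightTriangle (a b c : ℤ) : ¬FermatRightTriangle a b c := by
  induction hn : a.natAbs using Nat.strong_induction_on generalizing a b c with
  | _ n ih =>
    intro h
    obtain ⟨a', b', c', h', hlt⟩ := h.exists_smaller
    exact ih _ (hn ▸ hlt) a' b' c' rfl h'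

theorem fourth_pow_eq_of_add_fourth_pow_eq_two_mul_sq {x y z : ℤ} (hxz : IsCoprime x z)
    (hx : x ≠ 0) (hy : y ≠ 0) (h : x ^ 4 + y ^ 4 = 2 * z ^ 2) : x ^ 4 = y ^ 4 := by
  by_contra hne
  have hzy : IsCoprime z y := by
    have := hxz.symm.pow_right (n := 4) |>.neg_right.add_mul_left_right (2 * z)
    rw [show -x ^ 4 + z * (2 * z) = y ^ 4 by linear_combination -h] at this
    exact (IsCoprime.pow_right_iff four_pos).mp this
  refine not_fermatRightTriangle z (x * y) (z ^ 2 - y ^ 4)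
    ⟨hxz.symm.mul_right hzy, mul_ne_zero hx hy, fun h0 ↦ hne ?_, ?_⟩
  · linear_combination h + 2 * h0
  · linear_combination -y ^ 4 * h

theorem stmt_8_general (X Y Z : ℕ) (hX : 0 < X) (hY : 0 < Y)
    (hgcd : Nat.gcd X Z = 1) (h : X ^ 4 + Y ^ 4 = 2 * Z ^ 2) :
    X = 1 ∧ Y = 1 ∧ Z = 1 := by
  have hXY : X = Y := by
    have := fourth_pow_eq_of_add_fourth_pow_eq_two_mul_sq (y := Y)
      (Nat.isCoprime_iff_coprime.mpr hgcd) (by positivity) (by positivity) (by exact_mod_cast h)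
    exact Nat.pow_left_injective four_ne_zero (by exact_mod_cast this)
  subst hXY
  obtain rfl : Z = X ^ 2 := Nat.pow_left_injective two_ne_zero (by dsimp only; linarith)
  obtain rfl : X = 1 := by simpa using hgcd
  simp

theorem stmt_8 (X Y Z : ℕ) (hX : 0 < X) (hY : 0 < Y) (hZ : 0 < Z)
    (hgcd : Nat.gcd X Z = 1) (h : X ^ 4 + Y ^ 4 = 2 * Z ^ 2) :
    X = 1 ∧ Y = 1 ∧ Z = 1 :=
  stmt_8_general X Y Z hX hY hgcd h
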